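/- Let u be a real number with 0 < u < arccosh(3/2), p a positive integer, ξ := u + 2pπi, and let U₀ := {z ∈ ℂ : 0 < Re z + (u/(2pπ))·Im z < 1/p}. Then for every z ∈ U₀: (i) e^{ξ(1−z)} ∉ (1,∞) and e^{ξ(1+z)} ∉ (1,∞), and (1/ξ)·Li₂(e^{ξ(1−z)}) − (1/ξ)·Li₂(e^{ξ(1+z)}) − uz + 4pπ²/ξ = F(z); (ii) e^{u} + e^{−u} − e^{ξz} − e^{−ξz} ∉ (−∞, 0], and the complex derivative of F at z equals log(e^{u} + e^{−u} − e^{ξz} − e^{−ξz}), where log is the principal branch. -/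

import Mathlib

open Complex MeasureTheory

/-- Inverse hyperbolic cosine. -/
noncomputable def arccosh (x : ℝ) : ℝ := Real.log (x + Real.sqrt (x ^ 2 - 1))

/-- ξ = u + 2pπi -/
noncomputable def xiC (u : ℝ) (p : ℕ) : ℂ := (u : ℂ) + 2 * p * Real.pi * Complex.I

/-- The dilogarithm. -/
noncomputable def Li2 (z : ℂ) : ℂ := -∫ t in (0:ℝ)..1, Complex.log (1 - t * z) / t

/-- φ(u). -/
noncomputable def phiu (u : ℝ) : ℂ :=
  Complex.log ((Real.cosh u : ℂ) - 1/2 -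
    (Complex.I / 2) * (Real.sqrt ((2 * Real.cosh u + 1) * (3 - 2 * Real.cosh u)) : ℂ))

/-- The potential function F. -/
noncomputable def Ffun (u : ℝ) (p : ℕ) (z : ℂ) : ℂ :=
  (1 / xiC u p) * Li2 (Complex.exp (-(xiC u p) * (1 + z))) -
  (1 / xiC u p) * Li2 (Complex.exp (-(xiC u p) * (1 - z))) +
  (u : ℂ) * z - 2 * Real.pi * Complex.I

/-!
Write `ζ = ξ z`. Since `e^ξ = e^u`, the four dilogarithm arguments are `e^{±u ± ζ}`, and on `U₀`
we have `Im ζ ∈ (0, 2π)`, which keeps `e^{±ζ}` off `[0, ∞)`; hence every `1 - e^{±u ± ζ}` lies in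
the slit plane. Differentiating under the integral gives `Li₂'(w) = -log (1 - w) / w`, so
`F'(z) = log (1 - e^{-u-ζ}) + log (1 - e^{-u+ζ}) + u`. The two factors have imaginary parts of
opposite signs, so their logarithms add up to the logarithm of their product
`e^{-u} (e^u + e^{-u} - e^ζ - e^{-ζ})`. The alternative expression has the same derivative, and
the two agree at `ζ = πi`, where the dilogarithm terms cancel in pairs; `U₀` is convex.
-/

open Set Filter intervalIntegral Interval
open scoped Real

lemma one_sub_ofReal_mul_mem_slitPlane {w : ℂ} (hw : 1 - w ∈ slitPlane) {t : ℝ}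
    (ht : t ∈ Icc (0 : ℝ) 1) : 1 - t * w ∈ slitPlane := by
  simpa [sub_eq_add_neg, real_smul] using
    starConvex_one_slitPlane.add_smul_mem (y := -w) (by rwa [← sub_eq_add_neg]) ht.1 ht.2

lemma intervalIntegrable_log_one_sub_mul_div {w : ℂ} (hw : 1 - w ∈ slitPlane) :
    IntervalIntegrable (fun t : ℝ => log (1 - t * w) / t) volume 0 1 := by
  set g : ℝ → ℂ := fun t => log (1 - t * w)
  set s : Set ℝ := {t | 1 - t * w ∈ slitPlane}
  have hs : IsOpen s := isOpen_slitPlane.preimage (by fun_prop)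
  have hg : ∀ t ∈ s, DifferentiableAt ℝ g t := fun t ht =>
    (((differentiableAt_log ht).restrictScalars ℝ).comp t
      (by fun_prop : DifferentiableAt ℝ (fun t : ℝ => 1 - (t : ℂ) * w) t) :)
  have hslope : ContinuousOn (dslope g 0) s :=
    (continuousOn_dslope (hs.mem_nhds (by simp [s]))).2
      ⟨fun t ht => (hg t ht).continuousAt.continuousWithinAt, hg 0 (by simp [s])⟩
  refine (intervalIntegrable_congr fun t ht => ?_).1
    ((hslope.mono fun t ht => ?_).intervalIntegrable (a := 0) (b := 1))
  · rw [uIoc_of_le zero_le_one] at ht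
    rw [dslope_of_ne _ ht.1.ne', slope_def_module]
    simp [g, div_eq_inv_mul, real_smul]
  · rw [uIcc_of_le zero_le_one] at ht
    exact one_sub_ofReal_mul_mem_slitPlane hw ht

lemma integral_inv_one_sub_ofReal_mul {w : ℂ} (hw : 1 - w ∈ slitPlane) (hw0 : w ≠ 0) :
    ∫ t in (0 : ℝ)..1, (1 - t * w)⁻¹ = -log (1 - w) / w := by
  rw [eq_div_iff hw0, ← log_inv _ (slitPlane_arg_ne_pi hw), log_inv_eq_integral hw]
  simp [real_smul, mul_comm]

theorem hasDerivAt_Li2 {w : ℂ} (hw : 1 - w ∈ slitPlane) (hw0 : w ≠ 0) :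
    HasDerivAt Li2 (-log (1 - w) / w) w := by
  obtain ⟨ε, hε, hball⟩ := Metric.isOpen_iff.1
    (isOpen_slitPlane.preimage (by fun_prop : Continuous fun x : ℂ => 1 - x)) w hw
  have hslit : ∀ t ∈ Icc (0 : ℝ) 1, ∀ x ∈ Metric.ball w ε, 1 - t * x ∈ slitPlane :=
    fun t ht x hx => one_sub_ofReal_mul_mem_slitPlane (hball hx) ht
  -- the derivative `-(1 - t x)⁻¹` of the integrand is bounded on `[0, 1] × closedBall w (ε / 2)`
  obtain ⟨C, hC⟩ :=
    (isCompact_Icc.prod (isCompact_closedBall w (ε / 2))).exists_bound_of_continuousOn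
      (f := fun q : ℝ × ℂ => (1 - q.1 * q.2)⁻¹) <| ContinuousOn.inv₀ (by fun_prop) fun q hq =>
        slitPlane_ne_zero <| hslit q.1 hq.1 q.2 <|
          Metric.closedBall_subset_ball (by linarith) hq.2
  have hIoc : ∀ t ∈ Ι (0 : ℝ) 1, t ∈ Icc (0 : ℝ) 1 := fun t ht => by
    rw [uIoc_of_le zero_le_one] at ht; exact Ioc_subset_Icc_self ht
  have key := hasDerivAt_integral_of_dominated_loc_of_deriv_le
    (F := fun x (t : ℝ) => log (1 - t * x) / t) (F' := fun x (t : ℝ) => -(1 - t * x)⁻¹)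
    (bound := fun _ => C) (Metric.ball_mem_nhds w (half_pos hε))
    (Eventually.of_forall fun x =>
      (by fun_prop : Measurable fun t : ℝ => log (1 - t * x) / t).aestronglyMeasurable)
    (intervalIntegrable_log_one_sub_mul_div hw) (by fun_prop)
    (ae_of_all _ fun t ht x hx => by
      simpa using hC (t, x) ⟨hIoc t ht, Metric.ball_subset_closedBall hx⟩)
    intervalIntegrable_const
    (ae_of_all _ fun t ht x hx => by
      have ht0 : (t : ℂ) ≠ 0 := by
        rw [uIoc_of_le zero_le_one] at ht; exact_mod_cast ht.1.ne'
      have hx' := Metric.ball_subset_ball (half_le_self hε.le) hx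
      exact (((hasDerivAt_log (hslit t (hIoc t ht) x hx')).comp x
        (((hasDerivAt_id x).const_mul (t : ℂ)).const_sub 1)).div_const (t : ℂ)).congr_deriv
          (by rw [mul_one, mul_neg, neg_div, mul_div_cancel_right₀ _ ht0]))
  exact key.2.neg.congr_deriv <| by
    rw [intervalIntegral.integral_neg, integral_inv_one_sub_ofReal_mul hw hw0, neg_neg]

theorem HasDerivAt.Li2_cexp {f : ℂ → ℂ} {f' z : ℂ} (hf : HasDerivAt f f' z)
    (h : 1 - Complex.exp (f z) ∈ slitPlane) :
    HasDerivAt (fun x => Li2 (Complex.exp (f x)))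
      (-Complex.log (1 - Complex.exp (f z)) * f') z := by
  have := (hasDerivAt_Li2 h (Complex.exp_ne_zero _)).comp z hf.cexp
  exact this.congr_deriv (by field_simp [Complex.exp_ne_zero])

lemma neg_exp_mem_slitPlane {ζ : ℂ} (h : Real.cos ζ.im ≠ 1) : -exp ζ ∈ slitPlane := by
  rw [mem_slitPlane_iff, neg_re, neg_im, exp_re, exp_im]
  by_cases hsin : Real.sin ζ.im = 0
  · have hcos : Real.cos ζ.im = -1 := (sq_eq_one_iff.1 <| by
      nlinarith [Real.sin_sq_add_cos_sq ζ.im]).resolve_left h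
    left
    rw [hcos]
    simpa using Real.exp_pos ζ.re
  · right
    simpa [Real.exp_ne_zero] using hsin

lemma one_sub_exp_mem_slitPlane {ζ : ℂ} (h : Real.cos ζ.im ≠ 1) : 1 - exp ζ ∈ slitPlane := by
  have := neg_exp_mem_slitPlane h
  rw [mem_slitPlane_iff] at this ⊢
  simp only [sub_re, sub_im, one_re, one_im, neg_re, neg_im] at this ⊢
  rcases this with h | h
  · left; linarith
  · right; simpa using h

lemma one_sub_exp_ofReal_add_mem_slitPlane (x : ℝ) {ζ : ℂ} (h : Real.cos ζ.im ≠ 1) :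
    1 - exp (x + ζ) ∈ slitPlane :=
  one_sub_exp_mem_slitPlane (by simpa using h)

lemma one_sub_exp_ofReal_sub_mem_slitPlane (x : ℝ) {ζ : ℂ} (h : Real.cos ζ.im ≠ 1) :
    1 - exp (x - ζ) ∈ slitPlane :=
  one_sub_exp_mem_slitPlane (by simpa using h)

lemma exp_ne_ofReal_of_cos_im_ne_one {ζ : ℂ} (h : Real.cos ζ.im ≠ 1) {t : ℝ} (ht : 0 ≤ t) :
    exp ζ ≠ t := fun hζ => by
  have := neg_exp_mem_slitPlane h
  rw [hζ, neg_ofReal_mem_slitPlane] at this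
  linarith

lemma arg_add_arg_mem_Ioo_of_im_mul_nonpos {a b : ℂ} (ha : a ∈ slitPlane) (hb : b ∈ slitPlane)
    (h : a.im * b.im ≤ 0) : arg a + arg b ∈ Ioo (-π) π := by
  have arg_lt_pi : ∀ x ∈ slitPlane, arg x < π := fun x hx =>
    (arg_le_pi x).lt_of_ne (slitPlane_arg_ne_pi hx)
  have arg_nonpos : ∀ x ∈ slitPlane, x.im ≤ 0 → arg x ≤ 0 := fun x hx hxim => by
    rcases hxim.lt_or_eq with hxim | hxim
    · exact (arg_neg_iff.2 hxim).le
    · have hxre : 0 < x.re := by simpa [mem_slitPlane_iff, hxim] using hx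
      exact (arg_eq_zero_iff.2 ⟨hxre.le, hxim⟩).le
  rcases mul_nonpos_iff.1 h with ⟨ha0, hb0⟩ | ⟨ha0, hb0⟩
  · have := arg_nonneg_iff.2 ha0
    have := arg_nonpos b hb hb0
    have := neg_pi_lt_arg b
    have := arg_lt_pi a ha
    constructor <;> linarith
  · have := arg_nonneg_iff.2 hb0
    have := arg_nonpos a ha ha0
    have := neg_pi_lt_arg a
    have := arg_lt_pi b hb
    constructor <;> linarith

/-- `(1 - e^(x+ζ)) (1 - e^(x-ζ)) = eˣ (eˣ + e⁻ˣ - e^ζ - e^(-ζ))`, and the two factors lie in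
opposite half-planes, so the logarithm of the product splits. -/
lemma log_one_sub_exp_add_log_one_sub_exp (x : ℝ) {ζ : ℂ} (hζ : Real.cos ζ.im ≠ 1) :
    exp x + exp (-x) - exp ζ - exp (-ζ) ∈ slitPlane ∧
      log (1 - exp (x + ζ)) + log (1 - exp (x - ζ)) =
        x + log (exp x + exp (-x) - exp ζ - exp (-ζ)) := by
  set Q := exp x + exp (-x) - exp ζ - exp (-ζ)
  have hA := one_sub_exp_ofReal_add_mem_slitPlane x hζ
  have hB := one_sub_exp_ofReal_sub_mem_slitPlane x hζ
  have hprod : (1 - exp (x + ζ)) * (1 - exp (x - ζ)) = Real.exp x * Q := by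
    simp only [Q, ofReal_exp, exp_add, exp_sub, exp_neg]
    field_simp
    ring
  have hargs : arg (1 - exp (x + ζ)) + arg (1 - exp (x - ζ)) ∈ Ioo (-π) π := by
    refine arg_add_arg_mem_Ioo_of_im_mul_nonpos hA hB ?_
    simp only [sub_im, one_im, exp_im, add_im, sub_re, add_re, ofReal_im, ofReal_re, zero_add,
      zero_sub, Real.sin_neg]
    nlinarith [mul_pos (Real.exp_pos (x + ζ.re)) (Real.exp_pos (x - ζ.re)),
      sq_nonneg (Real.sin ζ.im)]
  have hQ : Q ≠ 0 := fun hQ => by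
    simp [hQ, slitPlane_ne_zero hA, slitPlane_ne_zero hB] at hprod
  have harg_prod : arg ((1 - exp (x + ζ)) * (1 - exp (x - ζ))) ≠ π := by
    rw [arg_mul (slitPlane_ne_zero hA) (slitPlane_ne_zero hB) (Ioo_subset_Ioc_self hargs)]
    exact hargs.2.ne
  refine ⟨mem_slitPlane_iff_arg.2 ⟨?_, hQ⟩, ?_⟩
  · rwa [hprod, arg_real_mul _ (Real.exp_pos x)] at harg_prod
  · rw [← log_mul (slitPlane_ne_zero hA) (slitPlane_ne_zero hB) (Ioo_subset_Ioc_self hargs),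
      hprod, log_ofReal_mul (Real.exp_pos x) hQ, Real.log_exp]

lemma xiC_ne_zero (u : ℝ) {p : ℕ} (hp : 0 < p) : xiC u p ≠ 0 := fun h => by
  have := congrArg Complex.im h
  simp [xiC, Real.pi_ne_zero] at this
  omega

lemma exp_xiC (u : ℝ) (p : ℕ) : exp (xiC u p) = exp u := by
  rw [xiC, exp_add, show 2 * (p : ℂ) * π * I = p * (2 * π * I) by ring,
    exp_nat_mul_two_pi_mul_I, mul_one]

lemma exp_xiC_mul_one_add (u : ℝ) (p : ℕ) (z : ℂ) :
    exp (xiC u p * (1 + z)) = exp (u + xiC u p * z) := by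
  rw [mul_one_add, exp_add, exp_xiC, exp_add]

lemma exp_xiC_mul_one_sub (u : ℝ) (p : ℕ) (z : ℂ) :
    exp (xiC u p * (1 - z)) = exp (u - xiC u p * z) := by
  rw [mul_one_sub, exp_sub, exp_xiC, exp_sub]

lemma exp_neg_xiC_mul_one_add (u : ℝ) (p : ℕ) (z : ℂ) :
    exp (-xiC u p * (1 + z)) = exp (-u - xiC u p * z) := by
  rw [neg_mul, exp_neg, exp_xiC_mul_one_add, ← exp_neg, neg_add, ← sub_eq_add_neg]

lemma exp_neg_xiC_mul_one_sub (u : ℝ) (p : ℕ) (z : ℂ) :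
    exp (-xiC u p * (1 - z)) = exp (-u + xiC u p * z) := by
  rw [neg_mul, exp_neg, exp_xiC_mul_one_sub, ← exp_neg, neg_sub, sub_eq_neg_add]

/-- For `0 < p` this is the paper's `U₀ = {z | 0 < Re z + (u / 2pπ) Im z < 1 / p}`. -/
def U0 (u : ℝ) (p : ℕ) : Set ℂ := {z | (xiC u p * z).im ∈ Ioo 0 (2 * π)}

lemma mem_U0 {u : ℝ} {p : ℕ} (hp : 0 < p) {z : ℂ} (hz0 : 0 < z.re + (u / (2 * p * π)) * z.im)
    (hz1 : z.re + (u / (2 * p * π)) * z.im < 1 / p) : z ∈ U0 u p := by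
  have hp' : (0 : ℝ) < p := by exact_mod_cast hp
  have him : (xiC u p * z).im = 2 * p * π * (z.re + (u / (2 * p * π)) * z.im) := by
    simp [xiC]
    field_simp
    ring
  rw [U0, mem_ofPred_eq, him]
  constructor
  · positivity
  · calc 2 * p * π * (z.re + (u / (2 * p * π)) * z.im) < 2 * p * π * (1 / p) := by gcongr
      _ = 2 * π := by field_simp

lemma isOpen_U0 (u : ℝ) (p : ℕ) : IsOpen (U0 u p) :=
  isOpen_Ioo.preimage (by fun_prop)

lemma convex_U0 (u : ℝ) (p : ℕ) : Convex ℝ (U0 u p) :=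
  (convex_Ioo 0 (2 * π)).linear_preimage (imLm ∘ₗ LinearMap.mulLeft ℝ (xiC u p))

lemma cos_im_ne_one_of_mem_U0 {u : ℝ} {p : ℕ} {z : ℂ} (hz : z ∈ U0 u p) :
    Real.cos (xiC u p * z).im ≠ 1 := fun h =>
  hz.1.ne' ((Real.cos_eq_one_iff_of_lt_of_lt (by linarith [hz.1, Real.pi_pos]) hz.2).1 h)

noncomputable def FfunAlt (u : ℝ) (p : ℕ) (z : ℂ) : ℂ :=
  (1 / xiC u p) * Li2 (exp (xiC u p * (1 - z))) -
    (1 / xiC u p) * Li2 (exp (xiC u p * (1 + z))) - u * z + 4 * p * π ^ 2 / xiC u p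

section Derivatives

variable {u : ℝ} {p : ℕ} {z : ℂ}

theorem hasDerivAt_Ffun (hξ : xiC u p ≠ 0) (hz : Real.cos (xiC u p * z).im ≠ 1) :
    HasDerivAt (Ffun u p)
      (log (exp u + exp (-u) - exp (xiC u p * z) - exp (-(xiC u p * z)))) z := by
  have h₁ : 1 - exp (-xiC u p * (1 + z)) ∈ slitPlane := by
    rw [exp_neg_xiC_mul_one_add]; exact_mod_cast one_sub_exp_ofReal_sub_mem_slitPlane (-u) hz
  have h₂ : 1 - exp (-xiC u p * (1 - z)) ∈ slitPlane := by
    rw [exp_neg_xiC_mul_one_sub]; exact_mod_cast one_sub_exp_ofReal_add_mem_slitPlane (-u) hz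
  have d₁ := (((hasDerivAt_id z).const_add 1).const_mul (-xiC u p)).Li2_cexp h₁
  have d₂ := (((hasDerivAt_id z).const_sub 1).const_mul (-xiC u p)).Li2_cexp h₂
  have hF := (((d₁.const_mul (1 / xiC u p)).sub (d₂.const_mul (1 / xiC u p))).add
    ((hasDerivAt_id z).const_mul (u : ℂ))).sub_const (2 * π * I)
  refine hF.congr_deriv ?_
  have hlog := (log_one_sub_exp_add_log_one_sub_exp (-u) hz).2
  push_cast at hlog
  simp only [id, exp_neg_xiC_mul_one_add, exp_neg_xiC_mul_one_sub]
  rw [neg_neg, add_comm (exp (-(u : ℂ)))] at hlog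
  field_simp
  linear_combination hlog

theorem hasDerivAt_FfunAlt (hξ : xiC u p ≠ 0) (hz : Real.cos (xiC u p * z).im ≠ 1) :
    HasDerivAt (FfunAlt u p)
      (log (exp u + exp (-u) - exp (xiC u p * z) - exp (-(xiC u p * z)))) z := by
  have h₁ : 1 - exp (xiC u p * (1 - z)) ∈ slitPlane := by
    rw [exp_xiC_mul_one_sub]; exact one_sub_exp_ofReal_sub_mem_slitPlane u hz
  have h₂ : 1 - exp (xiC u p * (1 + z)) ∈ slitPlane := by
    rw [exp_xiC_mul_one_add]; exact one_sub_exp_ofReal_add_mem_slitPlane u hz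
  have d₁ := (((hasDerivAt_id z).const_sub 1).const_mul (xiC u p)).Li2_cexp h₁
  have d₂ := (((hasDerivAt_id z).const_add 1).const_mul (xiC u p)).Li2_cexp h₂
  have hG := (((d₁.const_mul (1 / xiC u p)).sub (d₂.const_mul (1 / xiC u p))).sub
    ((hasDerivAt_id z).const_mul (u : ℂ))).add_const (4 * p * π ^ 2 / xiC u p)
  refine hG.congr_deriv ?_
  have hlog := (log_one_sub_exp_add_log_one_sub_exp u hz).2
  simp only [id, exp_xiC_mul_one_add, exp_xiC_mul_one_sub]
  field_simp
  linear_combination hlog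

end Derivatives

/-- At `z = πi/ξ` both pairs of dilogarithm arguments coincide: `ξ(1 + z) = ξ(1 - z) + 2πi`. -/
lemma FfunAlt_eq_Ffun_of_xiC_mul_eq {u : ℝ} {p : ℕ} {z : ℂ} (hξ : xiC u p ≠ 0)
    (hz : xiC u p * z = π * I) : FfunAlt u p z = Ffun u p z := by
  have hpos : xiC u p * (1 + z) = xiC u p * (1 - z) + 2 * π * I := by linear_combination 2 * hz
  have hneg : -xiC u p * (1 - z) = -xiC u p * (1 + z) + 2 * π * I := by linear_combination 2 * hz
  rw [FfunAlt, Ffun, hpos, hneg, exp_add, exp_add, exp_two_pi_mul_I, mul_one, mul_one]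
  field_simp
  simp only [xiC] at hz ⊢
  linear_combination -2 * u * hz + 4 * p * π ^ 2 * I_sq

theorem FfunAlt_eqOn_Ffun (u : ℝ) {p : ℕ} (hp : 0 < p) :
    EqOn (FfunAlt u p) (Ffun u p) (U0 u p) := by
  have hξ := xiC_ne_zero u hp
  have hG z (hz : z ∈ U0 u p) := hasDerivAt_FfunAlt hξ (cos_im_ne_one_of_mem_U0 hz)
  have hF z (hz : z ∈ U0 u p) := hasDerivAt_Ffun hξ (cos_im_ne_one_of_mem_U0 hz)
  have hz₀ : xiC u p * (π * I / xiC u p) = π * I := mul_div_cancel₀ _ hξ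
  have hz₀U : π * I / xiC u p ∈ U0 u p := by
    rw [U0, mem_ofPred_eq, hz₀]
    simp [Real.pi_pos]
  exact (isOpen_U0 u p).eqOn_of_deriv_eq (convex_U0 u p).isPreconnected
    (fun z hz => (hG z hz).differentiableAt.differentiableWithinAt)
    (fun z hz => (hF z hz).differentiableAt.differentiableWithinAt)
    (fun z hz => (hG z hz).deriv.trans (hF z hz).deriv.symm)
    hz₀U (FfunAlt_eq_Ffun_of_xiC_mul_eq hξ hz₀)

theorem Ffun_alt_and_deriv_general (u : ℝ) (p : ℕ) (hp : 0 < p) (z : ℂ)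
    (hz0 : 0 < z.re + (u / (2 * p * Real.pi)) * z.im)
    (hz1 : z.re + (u / (2 * p * Real.pi)) * z.im < 1 / p) :
    ((∀ t : ℝ, 1 < t → Complex.exp (xiC u p * (1 - z)) ≠ (t : ℂ)) ∧
     (∀ t : ℝ, 1 < t → Complex.exp (xiC u p * (1 + z)) ≠ (t : ℂ)) ∧
     (1 / xiC u p) * Li2 (Complex.exp (xiC u p * (1 - z))) -
       (1 / xiC u p) * Li2 (Complex.exp (xiC u p * (1 + z))) -
       (u : ℂ) * z + 4 * p * Real.pi ^ 2 / xiC u p = Ffun u p z) ∧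
    ((∀ t : ℝ, t ≤ 0 →
        Complex.exp (u : ℂ) + Complex.exp (-(u : ℂ)) -
          Complex.exp (xiC u p * z) - Complex.exp (-(xiC u p * z)) ≠ (t : ℂ)) ∧
     HasDerivAt (Ffun u p)
       (Complex.log (Complex.exp (u : ℂ) + Complex.exp (-(u : ℂ)) -
          Complex.exp (xiC u p * z) - Complex.exp (-(xiC u p * z)))) z) := by
  have hU : z ∈ U0 u p := mem_U0 hp hz0 hz1
  have hcos := cos_im_ne_one_of_mem_U0 hU
  have hQ := (log_one_sub_exp_add_log_one_sub_exp u hcos).1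
  refine ⟨⟨fun t ht => ?_, fun t ht => ?_, FfunAlt_eqOn_Ffun u hp hU⟩,
    fun t ht h => ?_, hasDerivAt_Ffun (xiC_ne_zero u hp) hcos⟩
  · rw [exp_xiC_mul_one_sub]
    refine exp_ne_ofReal_of_cos_im_ne_one ?_ (by linarith)
    rwa [sub_im, ofReal_im, zero_sub, Real.cos_neg]
  · rw [exp_xiC_mul_one_add]
    refine exp_ne_ofReal_of_cos_im_ne_one ?_ (by linarith)
    rwa [add_im, ofReal_im, zero_add]
  · rw [h, ofReal_mem_slitPlane] at hQ
    linarith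

/-- On `U₀`, the alternative expression for `F` and the formula for its derivative. -/
theorem Ffun_alt_and_deriv (u : ℝ) (hu0 : 0 < u) (hu1 : u < arccosh (3/2))
    (p : ℕ) (hp : 0 < p) (z : ℂ)
    (hz0 : 0 < z.re + (u / (2 * p * Real.pi)) * z.im)
    (hz1 : z.re + (u / (2 * p * Real.pi)) * z.im < 1 / p) :
    ((∀ t : ℝ, 1 < t → Complex.exp (xiC u p * (1 - z)) ≠ (t : ℂ)) ∧
     (∀ t : ℝ, 1 < t → Complex.exp (xiC u p * (1 + z)) ≠ (t : ℂ)) ∧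
     (1 / xiC u p) * Li2 (Complex.exp (xiC u p * (1 - z))) -
       (1 / xiC u p) * Li2 (Complex.exp (xiC u p * (1 + z))) -
       (u : ℂ) * z + 4 * p * Real.pi ^ 2 / xiC u p = Ffun u p z) ∧
    ((∀ t : ℝ, t ≤ 0 →
        Complex.exp (u : ℂ) + Complex.exp (-(u : ℂ)) -
          Complex.exp (xiC u p * z) - Complex.exp (-(xiC u p * z)) ≠ (t : ℂ)) ∧
     HasDerivAt (Ffun u p)
       (Complex.log (Complex.exp (u : ℂ) + Complex.exp (-(u : ℂ)) -
          Complex.exp (xiC u p * z) - Complex.exp (-(xiC u p * z)))) z) :=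
  Ffun_alt_and_deriv_general u p hp z hz0 hz1
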